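/- Let k ≥ 2 be an integer, v̂ ∈ L^{2k}(𝕋) 2π-periodic with zero average, v(t,x) := v̂(t+x) - v̂(t-x), and 0 ≤ α ≤ 1/(4(1+2k)). Then ∫_{Ω_α} v^{2k} ≥ 2π[1 - 2(1+2k)α] ∫₀^{2π} v̂^{2k} ≥ π ∫₀^{2π} v̂^{2k}, where Ω_α := 𝕋 × (απ, π-απ). -/

import Mathlib

/-!
For even `n ≥ 4` the middle binomial terms of `(a - b) ^ n` have a nonnegative sum:
`(a - b) ^ n ≥ a ^ n + b ^ n - n a ^ (n - 1) b - n a b ^ (n - 1)`. Applied to `a = v̂(t + x)`,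
`b = v̂(t - x)` and integrated over `𝕋 × (απ, π - απ)`, the pure powers give `2 (π - 2απ) ∫ v̂ⁿ`
by translation invariance, while the two cross terms become `x ↦ φ(2x)` for the correlation
`φ(y) = ∫ v̂ⁿ⁻¹(s) v̂(s - y) ds` and its mirror image. By Fubini each correlation has mean
`(∫ v̂ⁿ⁻¹)(∫ v̂) = 0`, so its integral over `(απ, π - απ)` is minus that over two strips of
length `απ`, where Young's inequality bounds it by `∫ v̂ⁿ`.
-/

section Binomial

open Finset

theorem nat_mul_pow_mul_sub_le_pow_sub_pow {A B : ℝ} (hA : 0 ≤ A) (hB : 0 ≤ B) (n : ℕ) :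
    n * A ^ (n - 1) * (B - A) ≤ B ^ n - A ^ n := by
  cases n with
  | zero => simp
  | succ m =>
    have hdiag : ∑ i ∈ range (m + 1), A ^ i * A ^ (m - i) = (m + 1) * A ^ m := by
      rw [sum_congr rfl fun i hi => by
        rw [← pow_add, Nat.add_sub_cancel' (Nat.lt_succ_iff.1 (mem_range.1 hi))]]
      simp
    -- each `B ^ i - A ^ i` has the sign of `B - A`
    have hsum : 0 ≤ (B - A) * ∑ i ∈ range (m + 1), (B ^ i - A ^ i) * A ^ (m - i) := by
      rw [mul_sum]
      refine sum_nonneg fun i _ => ?_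
      rw [← mul_assoc]
      refine mul_nonneg ?_ (pow_nonneg hA _)
      rcases le_total A B with h | h
      · exact mul_nonneg (sub_nonneg.2 h) (sub_nonneg.2 (pow_le_pow_left₀ hA h i))
      · exact mul_nonneg_of_nonpos_of_nonpos (sub_nonpos.2 h)
          (sub_nonpos.2 (pow_le_pow_left₀ hB h i))
    simp only [sub_mul, sum_sub_distrib, hdiag] at hsum
    rw [← geom_sum₂_mul, Nat.add_sub_cancel]
    push_cast
    linarith

theorem nat_mul_abs_pow_sub_one_mul_le {n : ℕ} (hn : Even n) (hn0 : n ≠ 0) (a b : ℝ) :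
    n * |a ^ (n - 1) * b| ≤ (n - 1) * a ^ n + b ^ n := by
  have h := nat_mul_pow_mul_sub_le_pow_sub_pow (abs_nonneg a) (abs_nonneg b) n
  have hpow : |a| ^ (n - 1) * |a| = |a| ^ n := by rw [← pow_succ, Nat.sub_add_cancel (by omega)]
  rw [abs_mul, abs_pow, ← hn.pow_abs a, ← hn.pow_abs b]
  linear_combination h + (n : ℝ) * hpow

theorem abs_pow_sub_one_mul_le_pow_add_pow {n : ℕ} (hn : Even n) (hn0 : n ≠ 0) (a b : ℝ) :
    |a ^ (n - 1) * b| ≤ a ^ n + b ^ n := by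
  have h := nat_mul_abs_pow_sub_one_mul_le hn hn0 a b
  have hn1 : (1 : ℝ) ≤ n := by exact_mod_cast Nat.one_le_iff_ne_zero.2 hn0
  have ha := hn.pow_nonneg a
  have hb := hn.pow_nonneg b
  nlinarith [abs_nonneg (a ^ (n - 1) * b)]

theorem abs_mul_pow_sub_one_le_pow_add_pow {n : ℕ} (hn : Even n) (hn0 : n ≠ 0) (a b : ℝ) :
    |a * b ^ (n - 1)| ≤ a ^ n + b ^ n := by
  rw [mul_comm, add_comm]
  exact abs_pow_sub_one_mul_le_pow_add_pow hn hn0 b a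

theorem abs_sub_pow_le {n : ℕ} (hn : Even n) (a b : ℝ) :
    |(a - b) ^ n| ≤ 2 ^ (n - 1) * (a ^ n + b ^ n) := by
  rw [abs_of_nonneg (hn.pow_nonneg _), ← hn.pow_abs, ← hn.pow_abs a, ← hn.pow_abs b]
  exact (pow_le_pow_left₀ (abs_nonneg _) (abs_sub _ _) n).trans
    (add_pow_le (abs_nonneg a) (abs_nonneg b) n)

theorem extreme_binomial_terms_le_sub_pow_of_le {n : ℕ} (hn0 : n ≠ 0) {a b : ℝ} (hb : 0 ≤ b)
    (hba : b ≤ a) :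
    a ^ n + b ^ n - n * (a ^ (n - 1) * b) - n * (a * b ^ (n - 1)) ≤ (a - b) ^ n := by
  have htangent := nat_mul_pow_mul_sub_le_pow_sub_pow (hb.trans hba) (sub_nonneg.2 hba) n
  have hn1 : (1 : ℝ) ≤ n := by exact_mod_cast Nat.one_le_iff_ne_zero.2 hn0
  have hbn : b ^ n ≤ a * b ^ (n - 1) := by
    rw [← Nat.sub_add_cancel (Nat.one_le_iff_ne_zero.2 hn0), pow_succ, Nat.add_sub_cancel,
      mul_comm a]
    exact mul_le_mul_of_nonneg_left hba (pow_nonneg hb _)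
  nlinarith [mul_nonneg (hb.trans hba) (pow_nonneg hb (n - 1))]

theorem extreme_binomial_terms_le_add_pow {n : ℕ} (hn : 3 ≤ n) {a c : ℝ} (ha : 0 ≤ a)
    (hc : 0 ≤ c) :
    a ^ n + c ^ n + n * (a ^ (n - 1) * c) + n * (a * c ^ (n - 1)) ≤ (a + c) ^ n := by
  obtain ⟨m, rfl⟩ : ∃ m, n = m + 3 := ⟨n - 3, by omega⟩
  have hmiddle : 0 ≤ ∑ j ∈ range m, a ^ (j + 1 + 1) * c ^ (m + 3 - (j + 1 + 1)) *
      ((m + 3).choose (j + 1 + 1) : ℝ) := sum_nonneg fun _ _ => by positivity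
  rw [add_pow, sum_range_succ, sum_range_succ, sum_range_succ', sum_range_succ']
  simp only [Nat.reduceSubDiff, Nat.cast_add, Nat.cast_ofNat, Nat.add_one_sub_one, zero_add,
    pow_one, Nat.choose_one_right, pow_zero, tsub_zero, one_mul, Nat.choose_zero_right,
    Nat.cast_one, mul_one, add_tsub_cancel_left, Nat.choose_succ_self_right, tsub_self,
    Nat.choose_self] at hmiddle ⊢
  linarith

theorem extreme_binomial_terms_le_sub_pow {n : ℕ} (hn : Even n) (hn3 : 3 ≤ n) (a b : ℝ) :
    a ^ n + b ^ n - n * (a ^ (n - 1) * b) - n * (a * b ^ (n - 1)) ≤ (a - b) ^ n := by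
  have hodd : Odd (n - 1) := Nat.Even.sub_odd (by omega) hn odd_one
  have hswap : ∀ x y : ℝ, (y - x) ^ n = (x - y) ^ n := fun x y => by
    rw [← neg_sub x y, hn.neg_pow]
  -- both sides are invariant under `(a, b) ↦ (-a, -b)` and `(a, b) ↦ (b, a)`
  wlog ha : 0 ≤ a generalizing a b
  · have := this (-a) (-b) (by linarith)
    rw [neg_sub_neg, hswap, hn.neg_pow, hn.neg_pow, hodd.neg_pow, hodd.neg_pow] at this
    linarith
  rcases le_total 0 b with hb | hb
  · rcases le_total b a with hba | hab
    · exact extreme_binomial_terms_le_sub_pow_of_le (by omega) hb hba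
    · have := extreme_binomial_terms_le_sub_pow_of_le (n := n) (by omega) ha hab
      rw [hswap] at this
      linarith
  · have := extreme_binomial_terms_le_add_pow hn3 ha (neg_nonneg.2 hb)
    rw [← sub_eq_add_neg, hn.neg_pow, hodd.neg_pow] at this
    linarith

end Binomial

open MeasureTheory Real Set Function

namespace Function.Periodic

variable {T : ℝ} {f : ℝ → ℝ}

theorem setIntegral_Ioc_comp_add (hf : Periodic f T) (hT : 0 ≤ T) (c : ℝ) :
    ∫ t in Ioc 0 T, f (t + c) = ∫ t in Ioc 0 T, f t := by
  rw [← intervalIntegral.integral_of_le hT, ← intervalIntegral.integral_of_le hT,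
    intervalIntegral.integral_comp_add_right, zero_add, add_comm, hf.intervalIntegral_add_eq c 0,
    zero_add]

theorem setIntegral_Ioc_comp_sub_left (hf : Periodic f T) (hT : 0 ≤ T) (c : ℝ) :
    ∫ t in Ioc 0 T, f (c - t) = ∫ t in Ioc 0 T, f t := by
  rw [← intervalIntegral.integral_of_le hT, ← intervalIntegral.integral_of_le hT,
    intervalIntegral.integral_comp_sub_left, sub_zero]
  simpa using hf.intervalIntegral_add_eq (c - T) 0

theorem integrableOn_Ioc_comp_add (hf : Periodic f T) (hT : 0 < T)
    (hint : IntegrableOn f (Ioc 0 T)) (c : ℝ) :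
    IntegrableOn (fun t => f (t + c)) (Ioc 0 T) := by
  rw [← intervalIntegrable_iff_integrableOn_Ioc_of_le hT.le] at hint ⊢
  simpa using (hf.intervalIntegrable₀ hT.ne' hint (0 + c) (T + c)).comp_add_right c

theorem integrable_comp_add_mul (hf : Periodic f T) (hT : 0 < T) (hmeas : Measurable f)
    (hint : IntegrableOn f (Ioc 0 T)) (ν : Measure ℝ) [IsFiniteMeasure ν] (σ : ℝ) :
    Integrable (fun z : ℝ × ℝ => f (z.1 + σ * z.2)) ((volume.restrict (Ioc 0 T)).prod ν) := by
  refine (integrable_prod_iff' (hmeas.comp (by fun_prop)).aestronglyMeasurable).2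
    ⟨ae_of_all _ fun x => hf.integrableOn_Ioc_comp_add hT hint (σ * x), ?_⟩
  have hnorm : ∀ x, ∫ t in Ioc 0 T, ‖f (t + σ * x)‖ = ∫ t in Ioc 0 T, ‖f t‖ := fun x =>
    (hf.comp (‖·‖)).setIntegral_Ioc_comp_add hT.le (σ * x)
  exact (integrable_const _).congr (ae_of_all _ fun x => (hnorm x).symm)

end Function.Periodic

section Correlation

variable {T : ℝ} {g v : ℝ → ℝ}

noncomputable def correlation (T : ℝ) (g v : ℝ → ℝ) (y : ℝ) : ℝ :=
  ∫ s in Ioc 0 T, g s * v (s - y)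

theorem measurable_correlation (hg : Measurable g) (hv : Measurable v) :
    Measurable (correlation T g v) :=
  (StronglyMeasurable.integral_prod_right (f := fun y s => g s * v (s - y))
    (by fun_prop : Measurable _).stronglyMeasurable).measurable

theorem integral_comp_add_mul_comp_sub (hg : Periodic g T) (hv : Periodic v T) (hT : 0 ≤ T)
    (x : ℝ) : ∫ t in Ioc 0 T, g (t + x) * v (t - x) = correlation T g v (2 * x) := by
  have hper : Periodic (fun s => g s * v (s - 2 * x)) T := hg.mul (hv.sub_const (2 * x))
  rw [correlation, ← hper.setIntegral_Ioc_comp_add hT x]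
  congr with t
  ring_nf

theorem correlation_swap (hg : Periodic g T) (hv : Periodic v T) (hT : 0 ≤ T) (y : ℝ) :
    correlation T v g y = correlation T g v (-y) := by
  have hper : Periodic (fun s => v s * g (s - y)) T := hv.mul (hg.sub_const y)
  rw [correlation, correlation, ← hper.setIntegral_Ioc_comp_add hT y]
  congr with s
  ring_nf

theorem integral_correlation (hv : Periodic v T) (hT : 0 ≤ T)
    (h : Integrable (fun z : ℝ × ℝ => g z.1 * v (z.1 - z.2))
      ((volume.restrict (Ioc 0 T)).prod (volume.restrict (Ioc 0 T)))) :
    ∫ y in Ioc 0 T, correlation T g v y = (∫ s in Ioc 0 T, g s) * ∫ s in Ioc 0 T, v s := by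
  simp only [correlation]
  rw [← integral_prod_symm _ h, integral_prod _ h]
  simp only [integral_const_mul, hv.setIntegral_Ioc_comp_sub_left hT]
  rw [integral_mul_const]

theorem abs_correlation_pow_le (hv : Periodic v T) (hT : 0 < T) {n : ℕ} (hn : Even n)
    (hn0 : n ≠ 0) (hint : IntegrableOn (fun s => v s ^ n) (Ioc 0 T)) (y : ℝ) :
    |correlation T (fun s => v s ^ (n - 1)) v y| ≤ ∫ s in Ioc 0 T, v s ^ n := by
  have hpow : Periodic (fun s => v s ^ n) T := hv.comp (· ^ n)
  have hshift : IntegrableOn (fun s => v (s - y) ^ n) (Ioc 0 T) := by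
    simpa [sub_eq_add_neg] using hpow.integrableOn_Ioc_comp_add hT hint (-y)
  have hshift_eq : ∫ s in Ioc 0 T, v (s - y) ^ n = ∫ s in Ioc 0 T, v s ^ n := by
    simpa [sub_eq_add_neg] using hpow.setIntegral_Ioc_comp_add hT.le (-y)
  have hn' : (0 : ℝ) < n := by exact_mod_cast Nat.pos_of_ne_zero hn0
  calc |correlation T (fun s => v s ^ (n - 1)) v y|
      ≤ ∫ s in Ioc 0 T, (((n : ℝ) - 1) * v s ^ n + v (s - y) ^ n) / n := by
        rw [← Real.norm_eq_abs]
        refine norm_integral_le_of_norm_le (((hint.const_mul _).add hshift).div_const _)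
          (ae_of_all _ fun s => ?_)
        rw [Real.norm_eq_abs, le_div_iff₀ hn', mul_comm]
        exact nat_mul_abs_pow_sub_one_mul_le hn hn0 _ _
    _ = ∫ s in Ioc 0 T, v s ^ n := by
        rw [integral_div, integral_add (hint.const_mul _) hshift, integral_const_mul, hshift_eq]
        field_simp
        ring

end Correlation

theorem integrable_prod_of_abs_le_pow_add_pow {T : ℝ} {v : ℝ → ℝ} {n : ℕ} (hv : Periodic v T)
    (hT : 0 < T) (hmeas : Measurable v) (hint : IntegrableOn (fun s => v s ^ n) (Ioc 0 T))
    (ν : Measure ℝ) [IsFiniteMeasure ν] (σ τ : ℝ) {p : ℝ → ℝ → ℝ}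
    (hp : Measurable (uncurry p)) (C : ℝ) (hpC : ∀ a b, |p a b| ≤ C * (a ^ n + b ^ n)) :
    Integrable (fun z : ℝ × ℝ => p (v (z.1 + σ * z.2)) (v (z.1 + τ * z.2)))
      ((volume.restrict (Ioc 0 T)).prod ν) := by
  have hpow : ∀ ρ, Integrable (fun z : ℝ × ℝ => v (z.1 + ρ * z.2) ^ n)
      ((volume.restrict (Ioc 0 T)).prod ν) := fun ρ =>
    (hv.comp (· ^ n)).integrable_comp_add_mul hT (by fun_prop) hint ν ρ
  refine (((hpow σ).add (hpow τ)).const_mul C).mono'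
    (hp.comp ((hmeas.comp (by fun_prop)).prodMk (hmeas.comp (by fun_prop)))).aestronglyMeasurable
    (ae_of_all _ fun z => ?_)
  exact (Real.norm_eq_abs _).trans_le (hpC _ _)

theorem abs_intervalIntegral_le_of_integral_eq_zero {φ : ℝ → ℝ} {a b δ M : ℝ}
    (hφ : IntervalIntegrable φ volume a b) (h0 : ∫ x in a..b, φ x = 0) (hM : ∀ x, |φ x| ≤ M)
    (hδ : 0 ≤ δ) (hδab : a + δ ≤ b - δ) :
    |∫ x in (a + δ)..(b - δ), φ x| ≤ 2 * δ * M := by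
  have hsub : ∀ c d, c ∈ uIcc a b → d ∈ uIcc a b → IntervalIntegrable φ volume c d :=
    fun c d hc hd => hφ.mono_set (uIcc_subset_uIcc hc hd)
  have hab : a ≤ b := by linarith
  have ha : a + δ ∈ uIcc a b := by rw [uIcc_of_le hab]; constructor <;> linarith
  have hb : b - δ ∈ uIcc a b := by rw [uIcc_of_le hab]; constructor <;> linarith
  have hsplit := intervalIntegral.integral_add_adjacent_intervals
    (hsub a (a + δ) left_mem_uIcc ha) (hsub (a + δ) (b - δ) ha hb)
  rw [← intervalIntegral.integral_add_adjacent_intervals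
    (hsub a (b - δ) left_mem_uIcc hb) (hsub (b - δ) b hb right_mem_uIcc), ← hsplit] at h0
  have hend : ∀ c d, |∫ x in c..d, φ x| ≤ M * |d - c| := fun c d =>
    intervalIntegral.norm_integral_le_of_norm_le_const fun x _ =>
      (Real.norm_eq_abs _).trans_le (hM x)
  have h1 := hend a (a + δ)
  have h2 := hend (b - δ) b
  rw [add_sub_cancel_left, abs_of_nonneg hδ] at h1
  rw [sub_sub_cancel, abs_of_nonneg hδ] at h2
  rw [show ∫ x in (a + δ)..(b - δ), φ x
      = -((∫ x in a..(a + δ), φ x) + ∫ x in (b - δ)..b, φ x) by linarith, abs_neg]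
  linarith [abs_add_le (∫ x in a..(a + δ), φ x) (∫ x in (b - δ)..b, φ x)]

theorem abs_setIntegral_Ioo_comp_two_mul_le {φ : ℝ → ℝ} {M α : ℝ} (hmeas : Measurable φ)
    (hM : ∀ y, |φ y| ≤ M) (h0 : ∫ y in Ioc 0 (2 * π), φ y = 0) (hα0 : 0 ≤ α)
    (hα : 2 * α ≤ 1) :
    |∫ x in Ioo (α * π) (π - α * π), φ (2 * x)| ≤ 2 * (α * π) * M := by
  have hint : IntervalIntegrable (fun x => φ (2 * x)) volume 0 π := by
    rw [intervalIntegrable_iff_integrableOn_Ioc_of_le pi_pos.le]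
    exact Measure.integrableOn_of_bounded (by simp)
      (hmeas.comp (measurable_const_mul 2)).aestronglyMeasurable (ae_of_all _ fun x => hM _)
  have hzero : ∫ x in 0..π, φ (2 * x) = 0 := by
    rw [intervalIntegral.integral_comp_mul_left _ two_ne_zero, mul_zero,
      intervalIntegral.integral_of_le (by positivity), h0, smul_zero]
  have := abs_intervalIntegral_le_of_integral_eq_zero hint hzero (fun x => hM _)
    (by positivity : 0 ≤ α * π) (by nlinarith [pi_pos])
  rwa [zero_add, intervalIntegral.integral_of_le (by nlinarith [pi_pos]),
    integral_Ioc_eq_integral_Ioo] at this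

theorem integral_sub_pow_ge_sub_correlations {T a b : ℝ} {v : ℝ → ℝ} {n : ℕ} (hn : Even n)
    (hn3 : 3 ≤ n) (hT : 0 < T) (hab : a ≤ b) (hper : Periodic v T) (hmeas : Measurable v)
    (hint : IntegrableOn (fun s => v s ^ n) (Ioc 0 T)) :
    2 * (b - a) * (∫ s in Ioc 0 T, v s ^ n)
        - n * (∫ x in Ioo a b, correlation T (fun s => v s ^ (n - 1)) v (2 * x))
        - n * (∫ x in Ioo a b, correlation T v (fun s => v s ^ (n - 1)) (2 * x))
      ≤ ∫ z in Ioc 0 T ×ˢ Ioo a b, (v (z.1 + z.2) - v (z.1 - z.2)) ^ n := by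
  set μ := (volume.restrict (Ioc 0 T)).prod (volume.restrict (Ioo a b))
  have hn0 : n ≠ 0 := by omega
  have hprod : ∀ p : ℝ → ℝ → ℝ, Measurable (uncurry p) → ∀ C,
      (∀ x y, |p x y| ≤ C * (x ^ n + y ^ n)) →
      Integrable (fun z : ℝ × ℝ => p (v (z.1 + z.2)) (v (z.1 - z.2))) μ := fun p hp C hpC => by
    simpa [← sub_eq_add_neg] using
      integrable_prod_of_abs_le_pow_add_pow hper hT hmeas hint _ 1 (-1) hp C hpC
  have iA : Integrable (fun z : ℝ × ℝ => v (z.1 + z.2) ^ n) μ :=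
    hprod (fun x _ => x ^ n) (by fun_prop) 1 fun x y => by
      rw [abs_of_nonneg (hn.pow_nonneg x)]; linarith [hn.pow_nonneg y]
  have iB : Integrable (fun z : ℝ × ℝ => v (z.1 - z.2) ^ n) μ :=
    hprod (fun _ y => y ^ n) (by fun_prop) 1 fun x y => by
      rw [abs_of_nonneg (hn.pow_nonneg y)]; linarith [hn.pow_nonneg x]
  have iC : Integrable (fun z : ℝ × ℝ => v (z.1 + z.2) ^ (n - 1) * v (z.1 - z.2)) μ :=
    hprod (fun x y => x ^ (n - 1) * y) (by fun_prop) 1 fun x y => by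
      rw [one_mul]; exact abs_pow_sub_one_mul_le_pow_add_pow hn hn0 x y
  have iD : Integrable (fun z : ℝ × ℝ => v (z.1 + z.2) * v (z.1 - z.2) ^ (n - 1)) μ :=
    hprod (fun x y => x * y ^ (n - 1)) (by fun_prop) 1 fun x y => by
      rw [one_mul]; exact abs_mul_pow_sub_one_le_pow_add_pow hn hn0 x y
  have iF : Integrable (fun z : ℝ × ℝ => (v (z.1 + z.2) - v (z.1 - z.2)) ^ n) μ :=
    hprod (fun x y => (x - y) ^ n) (by fun_prop) (2 ^ (n - 1)) (abs_sub_pow_le hn)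
  have hfubini : ∀ {H : ℝ × ℝ → ℝ} {h : ℝ → ℝ}, Integrable H μ →
      (∀ x, ∫ t in Ioc 0 T, H (t, x) = h x) → ∫ z, H z ∂μ = ∫ x in Ioo a b, h x :=
    fun hH hh => (integral_prod_symm _ hH).trans (integral_congr_ae (ae_of_all _ hh))
  have hpow : Periodic (fun s => v s ^ n) T := hper.comp (· ^ n)
  have eA := hfubini iA fun x => hpow.setIntegral_Ioc_comp_add hT.le x
  have eB := hfubini iB fun x => by
    simpa [sub_eq_add_neg] using hpow.setIntegral_Ioc_comp_add hT.le (-x)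
  have hpow' : Periodic (fun s => v s ^ (n - 1)) T := hper.comp (· ^ (n - 1))
  have eC := hfubini iC fun x => integral_comp_add_mul_comp_sub hpow' hper hT.le x
  have eD := hfubini iD fun x => integral_comp_add_mul_comp_sub hper hpow' hT.le x
  calc _ = ∫ z, (v (z.1 + z.2) ^ n + v (z.1 - z.2) ^ n
          - n * (v (z.1 + z.2) ^ (n - 1) * v (z.1 - z.2))
          - n * (v (z.1 + z.2) * v (z.1 - z.2) ^ (n - 1))) ∂μ := by
        rw [integral_sub, integral_sub, integral_add iA iB, integral_const_mul,
          integral_const_mul, eA, eB, eC, eD, setIntegral_const, Real.volume_real_Ioo_of_le hab,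
          smul_eq_mul]
        · ring
        exacts [iA.add iB, iC.const_mul _, (iA.add iB).sub (iC.const_mul _), iD.const_mul _]
    _ ≤ ∫ z, (v (z.1 + z.2) - v (z.1 - z.2)) ^ n ∂μ :=
        integral_mono (((iA.add iB).sub (iC.const_mul _)).sub (iD.const_mul _)) iF
          fun z => extreme_binomial_terms_le_sub_pow hn hn3 _ _
    _ = _ := by rw [Measure.volume_eq_prod, ← Measure.prod_restrict]

theorem integral_sub_pow_ge_of_integral_eq_zero {v : ℝ → ℝ} {n : ℕ} (hn : Even n) (hn3 : 3 ≤ n)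
    {α : ℝ} (hα0 : 0 ≤ α) (hα : 2 * α ≤ 1) (hper : Periodic v (2 * π)) (hmeas : Measurable v)
    (hint : IntegrableOn (fun s => v s ^ n) (Ioc 0 (2 * π)))
    (havg : ∫ s in Ioc 0 (2 * π), v s = 0) :
    2 * π * (1 - 2 * (1 + n) * α) * ∫ s in Ioc 0 (2 * π), v s ^ n ≤
      ∫ z in Ioc 0 (2 * π) ×ˢ Ioo (α * π) (π - α * π), (v (z.1 + z.2) - v (z.1 - z.2)) ^ n := by
  set M := ∫ s in Ioc 0 (2 * π), v s ^ n
  set g := fun s => v s ^ (n - 1)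
  have h2π : 0 < 2 * π := by positivity
  have hn0 : n ≠ 0 := by omega
  have hg : Periodic g (2 * π) := hper.comp (· ^ (n - 1))
  have hprod : ∀ p : ℝ → ℝ → ℝ, Measurable (uncurry p) → (∀ x y, |p x y| ≤ x ^ n + y ^ n) →
      Integrable (fun z : ℝ × ℝ => p (v z.1) (v (z.1 - z.2)))
        ((volume.restrict (Ioc 0 (2 * π))).prod (volume.restrict (Ioc 0 (2 * π)))) :=
    fun p hp hpC => by
      simpa [← sub_eq_add_neg] using integrable_prod_of_abs_le_pow_add_pow hper h2π hmeas hint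
        _ 0 (-1) hp 1 (by simpa using hpC)
  have hbound₁ : ∀ y, |correlation (2 * π) g v y| ≤ M :=
    abs_correlation_pow_le hper h2π hn hn0 hint
  have hbound₂ : ∀ y, |correlation (2 * π) v g y| ≤ M := fun y => by
    rw [correlation_swap hg hper h2π.le]; exact hbound₁ _
  have hmean₁ : ∫ y in Ioc 0 (2 * π), correlation (2 * π) g v y = 0 := by
    rw [integral_correlation hper h2π.le (hprod (fun x y => x ^ (n - 1) * y) (by fun_prop)
      (abs_pow_sub_one_mul_le_pow_add_pow hn hn0)), havg, mul_zero]
  have hmean₂ : ∫ y in Ioc 0 (2 * π), correlation (2 * π) v g y = 0 := by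
    rw [integral_correlation hg h2π.le (hprod (fun x y => x * y ^ (n - 1)) (by fun_prop)
      (abs_mul_pow_sub_one_le_pow_add_pow hn hn0)), havg, zero_mul]
  have h₁ := abs_setIntegral_Ioo_comp_two_mul_le
    (measurable_correlation (by fun_prop) hmeas) hbound₁ hmean₁ hα0 hα
  have h₂ := abs_setIntegral_Ioo_comp_two_mul_le
    (measurable_correlation hmeas (by fun_prop)) hbound₂ hmean₂ hα0 hα
  have hmain := integral_sub_pow_ge_sub_correlations (a := α * π) (b := π - α * π) hn hn3 h2π
    (by nlinarith [pi_pos]) hper hmeas hint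
  linear_combination hmain + (n : ℝ) * (le_abs_self _).trans h₁ +
    (n : ℝ) * (le_abs_self _).trans h₂

theorem stmt_15 (k : ℕ) (hk : 2 ≤ k) (vh : ℝ → ℝ) (α : ℝ)
    (hα0 : 0 ≤ α) (hα1 : α ≤ 1 / (4 * (1 + 2 * (k : ℝ))))
    (hper : Function.Periodic vh (2 * π)) (hmeas : Measurable vh)
    (hint : IntegrableOn (fun s => (vh s) ^ (2 * k)) (Ioc 0 (2 * π)))
    (havg : ∫ s in Ioc 0 (2 * π), vh s = 0) :
    (∫ z in (Ioc 0 (2 * π)) ×ˢ (Ioo (α * π) (π - α * π)),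
        (vh (z.1 + z.2) - vh (z.1 - z.2)) ^ (2 * k)) ≥
        2 * π * (1 - 2 * (1 + 2 * (k : ℝ)) * α) * ∫ s in Ioc 0 (2 * π), (vh s) ^ (2 * k) ∧
      2 * π * (1 - 2 * (1 + 2 * (k : ℝ)) * α) * (∫ s in Ioc 0 (2 * π), (vh s) ^ (2 * k)) ≥
        π * ∫ s in Ioc 0 (2 * π), (vh s) ^ (2 * k) := by
  have hα : 4 * (1 + 2 * (k : ℝ)) * α ≤ 1 := by
    rwa [le_div_iff₀ (by positivity), mul_comm] at hα1
  have hM : 0 ≤ ∫ s in Ioc 0 (2 * π), vh s ^ (2 * k) :=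
    setIntegral_nonneg measurableSet_Ioc fun s _ => (even_two_mul k).pow_nonneg _
  have hmain := integral_sub_pow_ge_of_integral_eq_zero (even_two_mul k) (by omega) hα0
    (by nlinarith) hper hmeas hint havg
  push_cast at hmain
  exact ⟨hmain, by linear_combination mul_nonneg (mul_nonneg pi_pos.le hM) (sub_nonneg.2 hα)⟩
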